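/- arXiv:1701.00397 — 2 statements merged into one kernel-verified Lean document; each statement's English description precedes it below -/
import Mathlib

section
/- Let b : ℝ → ℝ be continuous and monotone nondecreasing. Then for all r, s ∈ ℝ one has B(s) − B(r) ≤ (b(s) − b(r)) · s. -/
/-- For `b : ℝ → ℝ` continuous and monotone nondecreasing and
`B z = ∫ s in 0..z, (b z - b s)`, one has `B s - B r ≤ (b s - b r) * s` for all `r, s`. -/
theorem stmt4 (b : ℝ → ℝ) (hb_cont : Continuous b) (hb_mono : Monotone b)
    (B : ℝ → ℝ) (hB : ∀ z : ℝ, B z = ∫ s in (0:ℝ)..z, (b z - b s)) :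
    ∀ r s : ℝ, B s - B r ≤ (b s - b r) * s := by
  have hbi : ∀ a c : ℝ, IntervalIntegrable b MeasureTheory.volume a c :=
    fun a c => hb_cont.intervalIntegrable a c
  have hBz : ∀ z : ℝ, B z = z * b z - ∫ t in (0:ℝ)..z, b t := by
    intro z
    rw [hB z, intervalIntegral.integral_sub (intervalIntegrable_const) (hbi 0 z),
      intervalIntegral.integral_const]
    simp [smul_eq_mul]
  have key : ∀ r s : ℝ, (s - r) * b r ≤ ∫ t in r..s, b t := by
    intro r s
    rcases le_total r s with h | h
    · have := intervalIntegral.integral_mono_on h intervalIntegrable_const (hbi r s)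
        (fun x hx => hb_mono hx.1)
      simpa [intervalIntegral.integral_const, smul_eq_mul] using this
    · have h2 := intervalIntegral.integral_mono_on h (hbi s r) intervalIntegrable_const
        (fun x hx => hb_mono hx.2)
      rw [intervalIntegral.integral_symm]
      simp only [intervalIntegral.integral_const, smul_eq_mul] at h2
      linarith
  intro r s
  have hadd : (∫ t in (0:ℝ)..r, b t) + (∫ t in r..s, b t) = ∫ t in (0:ℝ)..s, b t :=
    intervalIntegral.integral_add_adjacent_intervals (hbi 0 r) (hbi r s)
  have hk := key r s
  rw [hBz r, hBz s]
  nlinarith [hb_mono (le_refl r)]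
end

section
/- Let ℓ be an odd positive integer, let β₁, β₂ be nonnegative real numbers, and let x, y be real numbers. Then (β₁·x^{ℓ+1} − β₂·y^{ℓ+1})/(ℓ+1) ≤ x^ℓ·(β₁·x − β₂·y) − (ℓ/(ℓ+1))·x^{ℓ+1}·(β₁ − β₂). -/
/-- Weighted AM-GM: for nonneg `a b`, `(ℓ+1)·a^ℓ·b ≤ ℓ·a^(ℓ+1) + b^(ℓ+1)`. -/
lemma key_amgm (ℓ : ℕ) (a b : ℝ) (ha : 0 ≤ a) (hb : 0 ≤ b) :
    ((ℓ : ℝ) + 1) * (a ^ ℓ * b) ≤ (ℓ : ℝ) * a ^ (ℓ + 1) + b ^ (ℓ + 1) := by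
  have hL : (0 : ℝ) < (ℓ : ℝ) + 1 := by positivity
  have h := Real.geom_mean_le_arith_mean2_weighted
    (w₁ := (ℓ : ℝ) / ((ℓ : ℝ) + 1)) (w₂ := 1 / ((ℓ : ℝ) + 1))
    (p₁ := a ^ (ℓ + 1)) (p₂ := b ^ (ℓ + 1))
    (by positivity) (by positivity) (by positivity) (by positivity)
    (by field_simp)
  have e1 : (a ^ (ℓ + 1) : ℝ) ^ ((ℓ : ℝ) / ((ℓ : ℝ) + 1)) = a ^ ℓ := by
    rw [← Real.rpow_natCast a (ℓ + 1), ← Real.rpow_mul ha]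
    have : ((ℓ : ℕ) + 1 : ℝ) * ((ℓ : ℝ) / ((ℓ : ℝ) + 1)) = (ℓ : ℝ) := by
      push_cast; field_simp
    push_cast
    rw [this, Real.rpow_natCast]
  have e2 : (b ^ (ℓ + 1) : ℝ) ^ ((1 : ℝ) / ((ℓ : ℝ) + 1)) = b := by
    rw [← Real.rpow_natCast b (ℓ + 1), ← Real.rpow_mul hb]
    have : ((ℓ : ℕ) + 1 : ℝ) * ((1 : ℝ) / ((ℓ : ℝ) + 1)) = 1 := by
      push_cast; field_simp
    push_cast
    rw [this, Real.rpow_one]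
  rw [e1, e2] at h
  have := mul_le_mul_of_nonneg_left h (le_of_lt hL)
  calc ((ℓ : ℝ) + 1) * (a ^ ℓ * b) ≤
      ((ℓ : ℝ) + 1) * ((ℓ : ℝ) / ((ℓ : ℝ) + 1) * a ^ (ℓ + 1) + 1 / ((ℓ : ℝ) + 1) * b ^ (ℓ + 1)) := this
    _ = (ℓ : ℝ) * a ^ (ℓ + 1) + b ^ (ℓ + 1) := by field_simp

/-- For an odd positive integer `ℓ`, nonnegative reals `β₁, β₂` and
reals `x, y`:
`(β₁·x^(ℓ+1) − β₂·y^(ℓ+1))/(ℓ+1) ≤ x^ℓ·(β₁·x − β₂·y) − (ℓ/(ℓ+1))·x^(ℓ+1)·(β₁ − β₂)`. -/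
theorem stmt9 (ℓ : ℕ) (hℓ_odd : Odd ℓ) (hℓ_pos : 0 < ℓ)
    (β₁ β₂ : ℝ) (hβ₁ : 0 ≤ β₁) (hβ₂ : 0 ≤ β₂) (x y : ℝ) :
    (β₁ * x ^ (ℓ + 1) - β₂ * y ^ (ℓ + 1)) / ((ℓ : ℝ) + 1) ≤
      x ^ ℓ * (β₁ * x - β₂ * y) - ((ℓ : ℝ) / ((ℓ : ℝ) + 1)) * x ^ (ℓ + 1) * (β₁ - β₂) := by
  have hL : (0 : ℝ) < (ℓ : ℝ) + 1 := by positivity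
  have heven : Even (ℓ + 1) := by
    obtain ⟨k, hk⟩ := hℓ_odd; exact ⟨k + 1, by omega⟩
  -- key: (ℓ+1) x^ℓ y ≤ ℓ x^{ℓ+1} + y^{ℓ+1}
  have hxy : ((ℓ : ℝ) + 1) * (x ^ ℓ * y) ≤ (ℓ : ℝ) * x ^ (ℓ + 1) + y ^ (ℓ + 1) := by
    have h1 : x ^ ℓ * y ≤ |x| ^ ℓ * |y| := by
      calc x ^ ℓ * y ≤ |x ^ ℓ * y| := le_abs_self _
        _ = |x| ^ ℓ * |y| := by rw [abs_mul, abs_pow]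
    have h2 := key_amgm ℓ |x| |y| (abs_nonneg x) (abs_nonneg y)
    rw [heven.pow_abs, heven.pow_abs] at h2
    calc ((ℓ : ℝ) + 1) * (x ^ ℓ * y) ≤ ((ℓ : ℝ) + 1) * (|x| ^ ℓ * |y|) :=
          mul_le_mul_of_nonneg_left h1 (le_of_lt hL)
      _ ≤ (ℓ : ℝ) * x ^ (ℓ + 1) + y ^ (ℓ + 1) := h2
  have h3 : 0 ≤ β₂ * ((ℓ : ℝ) * x ^ (ℓ + 1) + y ^ (ℓ + 1) - ((ℓ : ℝ) + 1) * (x ^ ℓ * y)) :=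
    mul_nonneg hβ₂ (by linarith)
  have hEq : (x ^ ℓ * (β₁ * x - β₂ * y) - ((ℓ : ℝ) / ((ℓ : ℝ) + 1)) * x ^ (ℓ + 1) * (β₁ - β₂))
        * ((ℓ : ℝ) + 1)
      = β₁ * x ^ (ℓ + 1) - β₂ * y ^ (ℓ + 1)
        + β₂ * ((ℓ : ℝ) * x ^ (ℓ + 1) + y ^ (ℓ + 1) - ((ℓ : ℝ) + 1) * (x ^ ℓ * y)) := by
    field_simp
    ring
  rw [div_le_iff₀ hL, hEq]
  linarith [h3]
end
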